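/- (Transport α-divergence for a scale family) Let θ_X, θ_Y > 0 and let p_X, p_Y be the pushforwards of a fixed density p_ref on ℝ under x ↦ θ_X x and x ↦ θ_Y x respectively. Then the quantile density ratio Q_{p_X}'(u)/Q_{p_Y}'(u) = θ_X/θ_Y for all u ∈ (0,1), and hence D_{T,α}(p_X‖p_Y) = (1/α²)((θ_X/θ_Y)^α − α log(θ_X/θ_Y) − 1) for α ≠ 0, and = (1/2)(log(θ_X/θ_Y))² for α = 0. -/
import Mathlib


open Real MeasureTheory

/-- The transport alpha function `f_{T,α}`. -/
noncomputable def fT (α z : ℝ) : ℝ :=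
  if α = 0 then (1 / 2) * (Real.log z) ^ 2
  else (1 / α ^ 2) * (z ^ α - α * Real.log z - 1)

theorem transport_alpha_scale_family
    (pref Qref : ℝ → ℝ) (hc : Continuous pref) (hpos : ∀ x, 0 < pref x)
    (hint : Integrable pref) (hnorm : ∫ x, pref x = 1)
    (hQ : ∀ u ∈ Set.Ioo (0 : ℝ) 1, HasDerivAt Qref (1 / pref (Qref u)) u)
    (θX θY α : ℝ) (hX : 0 < θX) (hY : 0 < θY) :
    (∀ u ∈ Set.Ioo (0 : ℝ) 1,
      deriv (fun v => θX * Qref v) u / deriv (fun v => θY * Qref v) u = θX / θY) ∧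
    (∫ u in Set.Ioo (0 : ℝ) 1,
        fT α (deriv (fun v => θX * Qref v) u / deriv (fun v => θY * Qref v) u))
      = if α ≠ 0 then (1 / α ^ 2) * ((θX / θY) ^ α - α * Real.log (θX / θY) - 1)
        else (1 / 2) * (Real.log (θX / θY)) ^ 2 := by
  have hratio : ∀ u ∈ Set.Ioo (0 : ℝ) 1,
      deriv (fun v => θX * Qref v) u / deriv (fun v => θY * Qref v) u = θX / θY := by
    intro u hu
    have hq := hQ u hu
    have hdX : deriv (fun v => θX * Qref v) u = θX * (1 / pref (Qref u)) :=
      ((hq.const_mul θX)).deriv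
    have hdY : deriv (fun v => θY * Qref v) u = θY * (1 / pref (Qref u)) :=
      ((hq.const_mul θY)).deriv
    have hp : pref (Qref u) ≠ 0 := (hpos _).ne'
    rw [hdX, hdY]
    field_simp
  refine ⟨hratio, ?_⟩
  have hcong : ∫ u in Set.Ioo (0 : ℝ) 1,
      fT α (deriv (fun v => θX * Qref v) u / deriv (fun v => θY * Qref v) u)
      = ∫ u in Set.Ioo (0 : ℝ) 1, fT α (θX / θY) := by
    apply setIntegral_congr_fun measurableSet_Ioo
    intro u hu
    show fT α _ = _; rw [hratio u hu]
  rw [hcong, setIntegral_const]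
  unfold fT
  by_cases h : α = 0 <;> simp [h]
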